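/- arXiv:2510.07808 — 2 statements merged into one kernel-verified Lean document; each statement's English description precedes it below -/
import Mathlib

section
/- Let d ≥ 1 and let β, λ ≥ 1 be parameters, and let G = ([n],[m],E) be a d-left-bounded bipartite graph. If λ ≥ 2d·(2dβ+1)^{2d}, then there exists a set S ⊆ [m] such that deleting the right vertices in S (and their incident edges) produces a bipartite graph containing r pairwise non-connected left vertices, where |S| ≤ r/β and r ≥ n/λ. -/
open Finset

def tow : ℕ → ℕ
  | 0 => 1
  | x + 1 => 2 ^ tow x

def hw {ι : Type*} [Fintype ι] (x : ι → Bool) : ℕ :=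
  (Finset.univ.filter fun i => x i = true).card

def IsLocal {κ ι : Type*} (d : ℕ) (f : (κ → Bool) → ι → Bool) : Prop :=
  ∀ i : ι, ∃ T : Finset κ, T.card ≤ d ∧
    ∀ x y : κ → Bool, (∀ j ∈ T, x j = y j) → f x i = f y i

def IsProductDist {κ : Type*} [Fintype κ] (p : (κ → Bool) → ℝ) : Prop :=
  ∃ γ : κ → ℝ, (∀ j, 0 ≤ γ j ∧ γ j ≤ 1) ∧
    ∀ x, p x = ∏ j, if x j then γ j else 1 - γ j

def IsDist {α : Type*} [Fintype α] (p : α → ℝ) : Prop :=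
  (∀ a, 0 ≤ p a) ∧ ∑ a, p a = 1

noncomputable def push {α β : Type*} [Fintype α] [DecidableEq β] (f : α → β) (p : α → ℝ) :
    β → ℝ :=
  fun b => ∑ a, if f a = b then p a else 0

noncomputable def tv {α : Type*} [Fintype α] (p q : α → ℝ) : ℝ :=
  (1 / 2) * ∑ a, |p a - q a|

noncomputable def biased {ι : Type*} [Fintype ι] (γ : ℝ) (x : ι → Bool) : ℝ :=
  ∏ i, if x i then γ else 1 - γ

noncomputable def unifParity (ι : Type*) [Fintype ι] [DecidableEq ι] (b : ℕ)
    (y : ι → Bool) : ℝ :=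
  if hw y % 2 = b then
    (1 : ℝ) / ((Finset.univ.filter fun z : ι → Bool => hw z % 2 = b).card : ℝ)
  else 0

noncomputable def dHard (n m : ℕ) (p : (Fin n → Bool) × (Fin m → Bool)) : ℝ :=
  biased (1 / 4) p.1 *
    (if hw p.1 % 2 = 1 then (1 / 2 : ℝ) ^ m
     else unifParity (Fin m) ((hw p.1 / 2) % 2) p.2)

def splitFun (n m : ℕ) (z : Fin (n + m) → Bool) : (Fin n → Bool) × (Fin m → Bool) :=
  (fun i => z (Fin.castAdd m i), fun j => z (Fin.natAdd n j))

noncomputable def dHard' (n m : ℕ) (z : Fin (n + m) → Bool) : ℝ :=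
  dHard n m (splitFun n m z)

def wOf {V : Type*} (Z : V → Bool) : Sym2 V → Bool :=
  Sym2.lift ⟨fun u v => xor (Z u) (Z v), fun u v => Bool.xor_comm _ _⟩

def ip {V : Type*} [Fintype V] (Z X : V → Bool) : ℕ :=
  (Finset.univ.filter fun v => Z v = true ∧ X v = true).card

noncomputable def dHost {V : Type*} [Fintype V] [DecidableEq V] (G : SimpleGraph V)
    [DecidableRel G.Adj] (z : (V ⊕ V ⊕ G.edgeSet) → Bool) : ℝ :=
  let X : V → Bool := fun v => z (Sum.inl v)
  let Y : V → Bool := fun v => z (Sum.inr (Sum.inl v))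
  let W : G.edgeSet → Bool := fun e => z (Sum.inr (Sum.inr e))
  biased (1 / 4) X *
    ∑ Z : V → Bool,
      (1 / 2 : ℝ) ^ (Fintype.card V) *
        (if ∀ e : G.edgeSet, W e = wOf Z e.1 then 1 else 0) *
        (if hw X % 2 = 1 then (1 / 2 : ℝ) ^ (Fintype.card V)
         else unifParity V ((ip Z X + hw X / 2) % 2) Y)

/-!
Induction on the left degree bound `k`, with the claim `|A| ≤ c ^ k * (|R| - β |S|)` for
`c ≥ 4 β k² + 4`; the potential `|R| - β |S|` is linear, so the deletions made at the
different levels add up instead of compounding. Call a right vertex heavy if it has at least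
`θ = 2 β k c ^ (k - 1)` neighbours in `A`. If at least half of `A` touches a heavy vertex,
delete all heavy vertices and recurse on those left vertices, whose degree has dropped: by
double counting there are at most `k |A| / θ` heavy vertices, and the extra factor `c` pays
for them. Otherwise at least half of `A` sees only light vertices, and a greedy choice of
pairwise disjoint neighbourhoods keeps one vertex out of every `k θ + 1`.
-/

namespace SeparatedFamily

variable {ι α : Type*} [DecidableEq α]

theorem card_sdiff_le_of_not_disjoint {s t : Finset α} {k : ℕ} (hs : #s ≤ k + 1)
    (hst : ¬Disjoint s t) : #(s \ t) ≤ k := by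
  obtain ⟨x, hxs, hxt⟩ := not_disjoint_iff.1 hst
  have hsub : s \ t ⊆ s.erase x := fun y hy => mem_erase.2
    ⟨fun h => (mem_sdiff.1 hy).2 (h ▸ hxt), (mem_sdiff.1 hy).1⟩
  have := card_le_card hsub
  rw [card_erase_of_mem hxs] at this
  omega

noncomputable def heavy (A : Finset ι) (I : ι → Finset α) (θ : ℝ) : Finset α :=
  {x ∈ A.biUnion I | θ ≤ #{i ∈ A | x ∈ I i}}

theorem mul_card_heavy_le {A : Finset ι} {I : ι → Finset α} {k : ℕ}
    (hA : ∀ i ∈ A, #(I i) ≤ k) (θ : ℝ) :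
    θ * #(heavy A I θ) ≤ k * #{i ∈ A | ¬Disjoint (I i) (heavy A I θ)} := by
  set B := heavy A I θ
  have hcount : #B * ⌈θ⌉₊ ≤ #{i ∈ A | ¬Disjoint (I i) B} * k := by
    refine card_mul_le_card_mul (fun x i => x ∈ I i) (fun x hx => ?_) fun i hi => ?_
    · refine (Nat.ceil_le.2 (mem_filter.1 hx).2).trans (card_le_card fun i hi => ?_)
      obtain ⟨hiA, hxi⟩ := mem_filter.1 hi
      exact mem_filter.2 ⟨mem_filter.2 ⟨hiA, not_disjoint_iff.2 ⟨x, hxi, hx⟩⟩, hxi⟩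
    · exact (card_le_card fun x hx => (mem_filter.1 hx).2).trans (hA i (mem_filter.1 hi).1)
  calc θ * #B ≤ ⌈θ⌉₊ * #B := by gcongr; exact Nat.le_ceil θ
    _ ≤ k * #{i ∈ A | ¬Disjoint (I i) B} := by
      rw [mul_comm, mul_comm (k : ℝ)]; exact_mod_cast hcount

theorem card_filter_mem_le_floor_of_notMem_heavy {A : Finset ι} {I : ι → Finset α} {θ : ℝ}
    {i : ι} {x : α} (hi : i ∈ A) (hx : x ∈ I i) (hxB : x ∉ heavy A I θ) :
    #{j ∈ A | x ∈ I j} ≤ ⌊θ⌋₊ := by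
  refine Nat.le_floor (le_of_not_ge fun h => hxB ?_)
  exact mem_filter.2 ⟨mem_biUnion.2 ⟨i, hi, hx⟩, h⟩

variable [DecidableEq ι]

theorem exists_pairwiseDisjoint_card_le_mul (I : ι → Finset α) (k D : ℕ) (H : Finset ι)
    (hk : ∀ i ∈ H, #(I i) ≤ k)
    (hD : ∀ i ∈ H, ∀ x ∈ I i, #{j ∈ H | x ∈ I j} ≤ D) :
    ∃ R ⊆ H, (R : Set ι).PairwiseDisjoint I ∧ #H ≤ (k * D + 1) * #R := by
  induction H using Finset.strongInduction with
  | H H ih =>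
  obtain rfl | ⟨i, hi⟩ := H.eq_empty_or_nonempty
  · exact ⟨∅, empty_subset _, by simp, by simp⟩
  set H' := {j ∈ H.erase i | Disjoint (I i) (I j)}
  have hH' : H' ⊆ H := (filter_subset _ _).trans (erase_subset _ _)
  obtain ⟨R, hRH', hR, hcard⟩ :=
    ih H' ((filter_subset _ _).trans_ssubset (erase_ssubset hi))
      (fun j hj => hk j (hH' hj))
      (fun j hj x hx => (card_le_card (filter_subset_filter _ hH')).trans (hD j (hH' hj) x hx))
  have hiR : i ∉ R := fun h => by simpa [H'] using hRH' h
  have hremoved : H \ H' ⊆ insert i ((I i).biUnion fun x => {j ∈ H | x ∈ I j}) := by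
    intro j hj
    obtain ⟨hjH, hjH'⟩ := mem_sdiff.1 hj
    by_cases hji : j = i
    · exact hji ▸ mem_insert_self _ _
    obtain ⟨x, hxi, hxj⟩ := not_disjoint_iff.1 fun h : Disjoint (I i) (I j) =>
      hjH' (by simp [H', hjH, hji, h])
    exact mem_insert_of_mem (mem_biUnion.2 ⟨x, hxi, mem_filter.2 ⟨hjH, hxj⟩⟩)
  have hremoved_card : #(H \ H') ≤ k * D + 1 :=
    calc #(H \ H') ≤ #((I i).biUnion fun x => {j ∈ H | x ∈ I j}) + 1 :=
          (card_le_card hremoved).trans (card_insert_le _ _)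
      _ ≤ #(I i) * D + 1 := by gcongr; exact card_biUnion_le_card_mul _ _ _ (hD i hi)
      _ ≤ k * D + 1 := by gcongr; exact hk i hi
  refine ⟨insert i R, insert_subset hi (hRH'.trans hH'), ?_, ?_⟩
  · rw [coe_insert]
    exact hR.insert fun j hj _ => (mem_filter.1 (hRH' hj)).2
  · calc #H ≤ #(H \ H') + #H' := card_le_card_sdiff_add_card
      _ ≤ (k * D + 1) + (k * D + 1) * #R := add_le_add hremoved_card hcard
      _ = (k * D + 1) * #(insert i R) := by rw [card_insert_of_notMem hiR]; ring

theorem exists_pairwiseDisjoint_of_disjoint_heavy {θ : ℝ} (hθ : 0 ≤ θ) (A : Finset ι)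
    (I : ι → Finset α) {k : ℕ} (hA : ∀ i ∈ A, #(I i) ≤ k) :
    ∃ R ⊆ {i ∈ A | Disjoint (I i) (heavy A I θ)}, (R : Set ι).PairwiseDisjoint I ∧
      (#{i ∈ A | Disjoint (I i) (heavy A I θ)} : ℝ) ≤ (k * θ + 1) * #R := by
  obtain ⟨R, hRH, hR, hcard⟩ := exists_pairwiseDisjoint_card_le_mul I k ⌊θ⌋₊
    {i ∈ A | Disjoint (I i) (heavy A I θ)} (fun i hi => hA i (mem_filter.1 hi).1)
    fun i hi x hx => (card_le_card (filter_subset_filter _ (filter_subset _ _))).trans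
      (card_filter_mem_le_floor_of_notMem_heavy (mem_filter.1 hi).1 hx
        (disjoint_left.1 (mem_filter.1 hi).2 hx))
  refine ⟨R, hRH, hR, ?_⟩
  calc _ ≤ ((k : ℝ) * ⌊θ⌋₊ + 1) * #R := by exact_mod_cast hcard
    _ ≤ (k * θ + 1) * #R := by gcongr; exact Nat.floor_le hθ

theorem exists_pairwiseDisjoint_sdiff {β c : ℝ} (hβ : 0 ≤ β) (k : ℕ)
    (hc : 4 * β * k ^ 2 + 4 ≤ c) (A : Finset ι) (I : ι → Finset α)
    (hA : ∀ i ∈ A, #(I i) ≤ k) :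
    ∃ R ⊆ A, ∃ S : Finset α, (R : Set ι).PairwiseDisjoint (fun i => I i \ S) ∧
      (#A : ℝ) ≤ c ^ k * (#R - β * #S) := by
  induction k generalizing A I with
  | zero =>
    refine ⟨A, subset_rfl, ∅, fun i hi j _ _ => ?_, by simp⟩
    simp [Function.onFun, card_eq_zero.1 (Nat.le_zero.1 (hA i hi))]
  | succ k ih =>
    push_cast at hc
    have hc4 : 4 ≤ c := by nlinarith
    have hck : 1 ≤ c ^ k := one_le_pow₀ (by linarith)
    set θ : ℝ := 2 * β * (k + 1) * c ^ k
    set B := heavy A I θ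
    set G := {i ∈ A | ¬Disjoint (I i) B}
    rw [pow_succ]
    by_cases hG : (#A : ℝ) ≤ 2 * #G
    · have hc_pred : 4 * β * k ^ 2 + 4 ≤ c :=
        le_trans (by gcongr; linarith) hc
      obtain ⟨R, hRG, S, hRS, hR⟩ := ih hc_pred G (fun i => I i \ B)
        fun i hi => card_sdiff_le_of_not_disjoint (hA i (mem_filter.1 hi).1) (mem_filter.1 hi).2
      have hB : 2 * β * c ^ k * #B ≤ #G := by
        refine le_of_mul_le_mul_right ?_ (by positivity : (0 : ℝ) < k + 1)
        have := mul_card_heavy_le hA θ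
        push_cast at this
        linarith
      refine ⟨R, hRG.trans (filter_subset _ _), B ∪ S, ?_, ?_⟩
      · simpa only [sdiff_sdiff_left, sup_eq_union] using hRS
      · have hBS : (#(B ∪ S) : ℝ) ≤ #B + #S := by exact_mod_cast card_union_le B S
        have h1 := mul_le_mul_of_nonneg_left hR (by linarith : (0 : ℝ) ≤ c)
        have h2 := mul_le_mul_of_nonneg_left hB (by linarith : (0 : ℝ) ≤ c)
        have h3 := mul_le_mul_of_nonneg_left hBS
          (mul_nonneg (by positivity : (0 : ℝ) ≤ c ^ k * c) hβ)
        have h4 : 4 * (#G : ℝ) ≤ c * #G := by gcongr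
        linarith
    · obtain ⟨R, hRH, hR, hHR⟩ := exists_pairwiseDisjoint_of_disjoint_heavy
        (by positivity : 0 ≤ θ) A I hA
      refine ⟨R, hRH.trans (filter_subset _ _), ∅, by simpa using hR, ?_⟩
      have hA_split : (#A : ℝ) = #{i ∈ A | Disjoint (I i) B} + #G := by
        exact_mod_cast (card_filter_add_card_filter_not _).symm
      push_cast at hHR
      have h5 : 2 * (#R : ℝ) ≤ 2 * c ^ k * #R := by gcongr; linarith
      have h6 : (4 * β * (k + 1) ^ 2 + 4) * c ^ k * #R ≤ c * c ^ k * #R := by gcongr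
      simp only [card_empty, CharP.cast_eq_zero, mul_zero, sub_zero]
      nlinarith

end SeparatedFamily

open SeparatedFamily in
theorem stmt16_general (d n m : ℕ) (hd : 1 ≤ d) (β lam : ℝ) (hβ : 1 ≤ β)
    (I : Fin n → Finset (Fin m)) (hI : ∀ i, (I i).card ≤ d)
    (h : 2 * (d : ℝ) * (2 * (d : ℝ) * β + 1) ^ (2 * d) ≤ lam) :
    ∃ (S : Finset (Fin m)) (r : ℕ) (R : Finset (Fin n)),
      R.card = r ∧
      (∀ i ∈ R, ∀ j ∈ R, i ≠ j → Disjoint (I i \ S) (I j \ S)) ∧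
      (S.card : ℝ) ≤ (r : ℝ) / β ∧ (n : ℝ) / lam ≤ (r : ℝ) := by
  have hd' : (1 : ℝ) ≤ d := by exact_mod_cast hd
  have hc : 4 * β * d ^ 2 + 4 ≤ (2 * d * β + 1) ^ 2 := by nlinarith
  obtain ⟨R, -, S, hRS, hn⟩ := exists_pairwiseDisjoint_sdiff (by linarith) d hc univ I
    fun i _ => hI i
  rw [card_univ, Fintype.card_fin, ← pow_mul] at hn
  have hpow : 1 ≤ (2 * d * β + 1) ^ (2 * d) := one_le_pow₀ (by nlinarith)
  have hpow_le : (2 * d * β + 1) ^ (2 * d) ≤ lam :=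
    (le_mul_of_one_le_left (by positivity) (by linarith)).trans h
  have hSR : 0 ≤ (#R : ℝ) - β * #S :=
    nonneg_of_mul_nonneg_right ((Nat.cast_nonneg n).trans hn) (by positivity)
  refine ⟨S, #R, R, rfl, fun i hi j hj hij => hRS hi hj hij, ?_, ?_⟩
  · rw [le_div_iff₀ (by linarith)]
    linarith
  · rw [div_le_iff₀ (by linarith)]
    calc (n : ℝ) ≤ (2 * d * β + 1) ^ (2 * d) * #R :=
          hn.trans (mul_le_mul_of_nonneg_left (sub_le_self _ (by positivity)) (by positivity))
      _ ≤ #R * lam := by rw [mul_comm]; gcongr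

theorem stmt16 (d n m : ℕ) (hd : 1 ≤ d) (β lam : ℝ) (hβ : 1 ≤ β) (hlam : 1 ≤ lam)
    (I : Fin n → Finset (Fin m)) (hI : ∀ i, (I i).card ≤ d)
    (h : 2 * (d : ℝ) * (2 * (d : ℝ) * β + 1) ^ (2 * d) ≤ lam) :
    ∃ (S : Finset (Fin m)) (r : ℕ) (R : Finset (Fin n)),
      R.card = r ∧
      (∀ i ∈ R, ∀ j ∈ R, i ≠ j → Disjoint (I i \ S) (I j \ S)) ∧
      (S.card : ℝ) ≤ (r : ℝ) / β ∧ (n : ℝ) / lam ≤ (r : ℝ) :=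
  stmt16_general d n m hd β lam hβ I hI h
end

section
/- Let d ≥ 1, let λ, κ ≥ 1 be parameters, let F be an increasing real function with F(x) ≥ 1 for all x ≥ 1, and let G = ([n],[m],E) be a d-left-bounded bipartite graph. Define F̃(x) = (1/d)·exp(32·d⁴·x²·F(2d·x)). Assume H is an increasing real function and L ≥ 1 is a parameter such that H(x) ≥ F̃(x) and H(x) ≥ 2x for all x ≥ L, and assume κ ≥ λ ≥ d·H^{(2d+2)}(L), where H^{(k)} denotes the k-fold iteration of H. Then there exists a set S ⊆ [m] such that deleting the right vertices in S (and their incident edges) produces a bipartite graph containing r pairwise non-connected left neighborhoods each of size at most t, where |S| ≤ r/F(t), r ≥ n/λ, and t ≤ κ. -/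
open Finset

def nbhdG {n m : ℕ} (I : Fin n → Finset (Fin m)) (S : Finset (Fin m)) (i : Fin n) :
    Finset (Fin n) :=
  Finset.univ.filter fun i' => ((I i \ S) ∩ (I i' \ S)).Nonempty

/-!
Write `θₖ = H^[k] L`. The right vertices of degree in `(θₖ, θₖ₊₁]`, `k < 2d + 2`, form disjoint
bands of total degree at most `nd`, so some band has total degree at most `n / 2`; discard the
left vertices touching it and delete the right vertices of degree above `Θ = θₖ₊₁ = H θₖ`
(at most `nd / Θ` of them). Every remaining left vertex then sees only right vertices of degree
at most `θₖ`, so its neighborhood has at most `t = d ⌊θₖ⌋` vertices spanning at most `s = d t`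
right vertices. A greedy elimination in at most `s` rounds keeps `r ≥ n / (2ρ^s)` of them with
pairwise non-connected neighborhoods, `ρ = 1 + 2 F(2dθₖ) s`, while deleting at most `r / 2F`
further right vertices. The growth `H θ ≥ exp (32 d⁴ θ² F (2dθ)) / d` makes `ρ^s` negligible
against `Θ`, which pays for the heavy vertices.
-/

open Function

section Greedy

variable {α β : Type*} [DecidableEq α] [DecidableEq β]

theorem exists_maximal_pairwiseDisjoint (A : Finset α) (f : α → Finset β) :
    ∃ B ⊆ A, (B : Set α).PairwiseDisjoint f ∧
      ∀ a ∈ A, (f a).Nonempty → ∃ b ∈ B, ¬Disjoint (f a) (f b) := by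
  classical
  obtain ⟨B, hB, hmax⟩ := exists_max_image
    (A.powerset.filter fun B : Finset α => (B : Set α).PairwiseDisjoint f) card ⟨∅, by simp⟩
  rw [mem_filter, mem_powerset] at hB
  refine ⟨B, hB.1, hB.2, fun a ha hfa => ?_⟩
  by_contra! hdisj
  have haB : a ∉ B := fun haB => hfa.ne_empty (disjoint_self.1 (hdisj a haB))
  have hins :
      insert a B ∈ A.powerset.filter fun B : Finset α => (B : Set α).PairwiseDisjoint f := by
    rw [mem_filter, mem_powerset, coe_insert]
    exact ⟨insert_subset ha hB.1, hB.2.insert fun b hb _ => hdisj b hb⟩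
  have := hmax _ hins
  rw [card_insert_of_notMem haB] at this
  omega

variable (supp : Finset β → α → Finset β)

omit [DecidableEq α] in
theorem card_supp_union_biUnion_lt
    (supp_anti : ∀ ⦃S S'⦄, S ⊆ S' → ∀ a, supp S' a ⊆ supp S a)
    (disjoint_supp : ∀ S a, Disjoint (supp S a) S) {S : Finset β} {B : Finset α} {a b : α}
    (hb : b ∈ B) (hab : ¬Disjoint (supp S a) (supp S b)) :
    #(supp (S ∪ B.biUnion (supp S)) a) < #(supp S a) := by
  obtain ⟨x, hxa, hxb⟩ := not_disjoint_iff.1 hab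
  refine card_lt_card ((ssubset_iff_of_subset (supp_anti subset_union_left a)).2 ⟨x, hxa, ?_⟩)
  exact disjoint_right.1 (disjoint_supp _ a) (mem_union_right _ (mem_biUnion.2 ⟨b, hb, hxb⟩))

/-- Take a maximal family with disjoint supports; if it is too small, delete the union of its
supports, which makes every support strictly smaller, and recurse. The cost `c` per deleted
vertex is paid for by the growth factor `ρ ≥ 1 + c k` of the target size. -/
theorem exists_pairwiseDisjoint_supp
    (supp_anti : ∀ ⦃S S'⦄, S ⊆ S' → ∀ a, supp S' a ⊆ supp S a)
    (disjoint_supp : ∀ S a, Disjoint (supp S a) S) {c ρ : ℝ} (hc : 0 ≤ c) (A : Finset α)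
    (k : ℕ) (hρ : 1 + c * k ≤ ρ) (S : Finset β) (hA : ∀ a ∈ A, #(supp S a) ≤ k) :
    ∃ S' B, S ⊆ S' ∧ B ⊆ A ∧ (B : Set α).PairwiseDisjoint (supp S') ∧
      c * #S' + #A / ρ ^ k ≤ c * #S + #B := by
  induction k generalizing S with
  | zero =>
    refine ⟨S, A, subset_rfl, subset_rfl, fun a ha b _ _ => ?_, by simp⟩
    simp [onFun, card_eq_zero.1 (Nat.le_zero.1 (hA a ha))]
  | succ k ih =>
    obtain ⟨B₀, hB₀A, hB₀, hmax⟩ := exists_maximal_pairwiseDisjoint A (supp S)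
    by_cases hbig : #A / ρ ^ (k + 1) ≤ #B₀
    · exact ⟨S, B₀, subset_rfl, hB₀A, hB₀, by linarith⟩
    have hlt : ∀ a ∈ A, ∀ b ∈ B₀, ¬Disjoint (supp S a) (supp S b) →
        #(supp (S ∪ B₀.biUnion (supp S)) a) < #(supp S a) := fun a _ b hb hab =>
      card_supp_union_biUnion_lt supp supp_anti disjoint_supp hb hab
    set D := B₀.biUnion (supp S)
    have hshrink : ∀ a ∈ A, #(supp (S ∪ D) a) ≤ k := by
      intro a ha
      obtain hempty | hne := (supp S a).eq_empty_or_nonempty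
      · have := supp_anti (subset_union_left (s₁ := S) (s₂ := D)) a
        rw [hempty, subset_empty] at this
        simp [this]
      · obtain ⟨b, hb, hab⟩ := hmax a ha hne
        have := hlt a ha b hb hab
        have := hA a ha
        omega
    push_cast at hρ
    have hρ1 : 1 ≤ ρ := by nlinarith [(k.cast_nonneg : (0 : ℝ) ≤ k)]
    obtain ⟨S', B, hSS', hBA, hB, hcard⟩ := ih (by linarith) (S ∪ D) hshrink
    refine ⟨S', B, subset_union_left.trans hSS', hBA, hB, ?_⟩
    set T := (#A : ℝ) / ρ ^ (k + 1)
    have hT : (#A : ℝ) / ρ ^ k = ρ * T := by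
      simp only [T, pow_succ]; field_simp
    have hD : (#D : ℝ) ≤ (k + 1) * T := by
      have : #D ≤ (k + 1) * #B₀ := card_biUnion_le.trans <| by
        rw [mul_comm, ← smul_eq_mul, ← sum_const]
        exact sum_le_sum fun b hb => hA b (hB₀A hb)
      calc (#D : ℝ) ≤ (k + 1) * #B₀ := by exact_mod_cast this
        _ ≤ (k + 1) * T := by gcongr; exact (not_le.1 hbig).le
    have hSD : (#(S ∪ D) : ℝ) ≤ #S + #D := by exact_mod_cast card_union_le S D
    have hcD : c * #(S ∪ D) ≤ c * #S + c * (k + 1) * T := by nlinarith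
    have hρT : (1 + c * (k + 1)) * T ≤ ρ * T := by gcongr
    linarith

end Greedy

section Graph

variable {n m : ℕ} (I : Fin n → Finset (Fin m))

def rightDeg (j : Fin m) : ℕ := #{i | j ∈ I i}

def nbhdSupport (S : Finset (Fin m)) (i : Fin n) : Finset (Fin m) :=
  (nbhdG I S i).biUnion fun u => I u \ S

theorem nbhdG_anti {S S' : Finset (Fin m)} (h : S ⊆ S') (i : Fin n) :
    nbhdG I S' i ⊆ nbhdG I S i := by
  intro u hu
  simp only [nbhdG, mem_filter, mem_univ, true_and] at hu ⊢
  exact hu.mono (inter_subset_inter (sdiff_subset_sdiff subset_rfl h)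
    (sdiff_subset_sdiff subset_rfl h))

theorem nbhdSupport_anti ⦃S S' : Finset (Fin m)⦄ (h : S ⊆ S') (i : Fin n) :
    nbhdSupport I S' i ⊆ nbhdSupport I S i :=
  (biUnion_mono fun _ _ => sdiff_subset_sdiff subset_rfl h).trans
    (biUnion_subset_biUnion_of_subset_left _ (nbhdG_anti I h i))

theorem disjoint_nbhdSupport (S : Finset (Fin m)) (i : Fin n) :
    Disjoint (nbhdSupport I S i) S := by
  simp only [nbhdSupport, disjoint_biUnion_left]
  exact fun _ _ => sdiff_disjoint

theorem disjoint_sdiff_of_disjoint_nbhdSupport {S : Finset (Fin m)} {i i' : Fin n}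
    (h : Disjoint (nbhdSupport I S i) (nbhdSupport I S i')) :
    ∀ u ∈ nbhdG I S i, ∀ v ∈ nbhdG I S i', Disjoint (I u \ S) (I v \ S) := fun _ hu _ hv =>
  h.mono (subset_biUnion_of_mem (fun u => I u \ S) hu)
    (subset_biUnion_of_mem (fun u => I u \ S) hv)

theorem sum_rightDeg : ∑ j, rightDeg I j = ∑ i, #(I i) := by
  simp only [rightDeg, card_filter]
  rw [sum_comm]
  simp

theorem card_filter_exists_mem_le_sum_rightDeg (T : Finset (Fin m)) :
    #{i | ∃ j ∈ I i, j ∈ T} ≤ ∑ j ∈ T, rightDeg I j := by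
  refine (card_le_card fun i hi => ?_).trans card_biUnion_le
  obtain ⟨j, hjI, hjT⟩ := (mem_filter.1 hi).2
  exact mem_biUnion.2 ⟨j, hjT, by simpa using hjI⟩

theorem card_nbhdG_le {S : Finset (Fin m)} {i : Fin n} {D : ℕ}
    (hD : ∀ j ∈ I i \ S, rightDeg I j ≤ D) : #(nbhdG I S i) ≤ #(I i) * D := by
  have hsub : nbhdG I S i ⊆ (I i \ S).biUnion fun j => {u | j ∈ I u} := by
    intro u hu
    obtain ⟨j, hj⟩ := (mem_filter.1 hu).2
    obtain ⟨hjS, hju⟩ := mem_inter.1 hj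
    exact mem_biUnion.2 ⟨j, hjS, by simpa using (mem_sdiff.1 hju).1⟩
  calc #(nbhdG I S i) ≤ ∑ j ∈ I i \ S, rightDeg I j :=
        (card_le_card hsub).trans card_biUnion_le
    _ ≤ #(I i \ S) * D := by rw [← smul_eq_mul, ← sum_const]; exact sum_le_sum hD
    _ ≤ #(I i) * D := Nat.mul_le_mul_right _ (card_le_card sdiff_subset)

theorem card_nbhdSupport_le {d : ℕ} (hI : ∀ i, #(I i) ≤ d) (S : Finset (Fin m)) (i : Fin n) :
    #(nbhdSupport I S i) ≤ #(nbhdG I S i) * d := by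
  calc #(nbhdSupport I S i) ≤ ∑ u ∈ nbhdG I S i, #(I u \ S) := card_biUnion_le
    _ ≤ #(nbhdG I S i) * d := by
      rw [← smul_eq_mul, ← sum_const]
      exact sum_le_sum fun u _ => (card_le_card sdiff_subset).trans (hI u)

theorem card_filter_lt_rightDeg_mul_le (Θ : ℝ) :
    (#{j | Θ < rightDeg I j} : ℝ) * Θ ≤ ∑ i, #(I i) :=
  calc (#{j | Θ < rightDeg I j} : ℝ) * Θ = #{j | Θ < rightDeg I j} • Θ :=
        (nsmul_eq_mul _ _).symm
    _ ≤ ∑ j ∈ {j | Θ < rightDeg I j}, (rightDeg I j : ℝ) :=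
      card_nsmul_le_sum _ _ _ fun j hj => (mem_filter.1 hj).2.le
    _ ≤ ∑ j, (rightDeg I j : ℝ) :=
      sum_le_sum_of_subset_of_nonneg (subset_univ _) fun _ _ _ => by positivity
    _ = ∑ i, #(I i) := by exact_mod_cast sum_rightDeg I

end Graph

noncomputable def band {β : Type*} [Fintype β] (w : β → ℕ) (a b : ℝ) : Finset β :=
  {j | a < w j ∧ (w j : ℝ) ≤ b}

theorem exists_mul_sum_band_le {β : Type*} [Fintype β] (w : β → ℕ) {θ : ℕ → ℝ}
    (hθ : Monotone θ) {N : ℕ} (hN : 0 < N) :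
    ∃ k < N, N * ∑ j ∈ band w (θ k) (θ (k + 1)), w j ≤ ∑ j, w j := by
  classical
  have hdisj : Pairwise (Disjoint on fun k => band w (θ k) (θ (k + 1))) :=
    (pairwise_disjoint_on _).2 fun k l hkl => disjoint_left.2 fun j hk hl => by
      simp only [band, mem_filter, mem_univ, true_and] at hk hl
      linarith [hθ (Nat.succ_le_of_lt hkl)]
  have hsum : ∑ k ∈ range N, ∑ j ∈ band w (θ k) (θ (k + 1)), w j ≤ ∑ j, w j := by
    rw [← sum_biUnion (hdisj.set_pairwise _)]
    exact sum_le_sum_of_subset (subset_univ _)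
  obtain ⟨k, hk, hle⟩ := exists_le_of_sum_le (s := range N)
    (f := fun k => N * ∑ j ∈ band w (θ k) (θ (k + 1)), w j) (g := fun _ => ∑ j, w j)
    ⟨0, mem_range.2 hN⟩ (by
      rw [← mul_sum, sum_const, card_range, smul_eq_mul]
      exact Nat.mul_le_mul_left _ hsum)
  exact ⟨k, mem_range.1 hk, hle⟩

theorem monotone_iterate_apply_of_le_map {α : Type*} [Preorder α] {f : α → α} {a : α}
    (hf : ∀ x, a ≤ x → x ≤ f x) : Monotone fun k => f^[k] a := by
  have ha : ∀ k, a ≤ f^[k] a := fun k => by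
    induction k with
    | zero => exact le_rfl
    | succ k ih => rw [iterate_succ_apply']; exact ih.trans (hf _ ih)
  exact monotone_nat_of_le_succ fun k => by
    rw [iterate_succ_apply']; exact hf _ (ha k)

theorem four_mul_mul_pow_le_exp {d θ φ : ℝ} {s : ℕ} (hd : 1 ≤ d) (hθ : 1 ≤ θ) (hφ : 1 ≤ φ)
    (hs : s ≤ d ^ 2 * θ) :
    4 * d * φ * (1 + 2 * φ * s) ^ s ≤ 1 / d * Real.exp (32 * d ^ 4 * θ ^ 2 * φ) := by
  set M := d ^ 4 * θ ^ 2 * φ with hM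
  have hM1 : 1 ≤ d ^ 4 * θ ^ 2 :=
    one_le_mul_of_one_le_of_one_le (one_le_pow₀ hd) (one_le_pow₀ hθ)
  have hdM : d ≤ M :=
    calc d ≤ d ^ 4 := le_self_pow₀ hd (by norm_num)
      _ ≤ d ^ 4 * θ ^ 2 := le_mul_of_one_le_right (by positivity) (one_le_pow₀ hθ)
      _ ≤ M := le_mul_of_one_le_right (by positivity) hφ
  have hφM : φ ≤ M := le_mul_of_one_le_left (by linarith) hM1
  have hexp : ∀ x, x ≤ M → x + 1 ≤ Real.exp M := fun x hx =>
    (add_le_add_left hx 1).trans (Real.add_one_le_exp M)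
  have hpow : (1 + 2 * φ * s) ^ s ≤ Real.exp (2 * M) := by
    have hss : (s : ℝ) * s ≤ d ^ 4 * θ ^ 2 := by nlinarith [(s.cast_nonneg : (0 : ℝ) ≤ s)]
    calc (1 + 2 * φ * s) ^ s ≤ Real.exp (2 * φ * s) ^ s := by
          gcongr; linarith [Real.add_one_le_exp (2 * φ * s)]
      _ = Real.exp (s * (2 * φ * s)) := (Real.exp_nat_mul _ s).symm
      _ ≤ Real.exp (2 * M) := Real.exp_le_exp.2 (by nlinarith)
  rw [one_div, le_inv_mul_iff₀ (by linarith)]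
  have h2M := hexp 1 (by linarith)
  have hdM' := hexp d hdM
  have hφM' := hexp φ hφM
  calc d * (4 * d * φ * (1 + 2 * φ * s) ^ s) = 2 * 2 * (d * d) * φ * (1 + 2 * φ * s) ^ s := by
        ring
    _ ≤ Real.exp M * Real.exp M * (Real.exp M * Real.exp M) * Real.exp M * Real.exp (2 * M) :=
        by gcongr <;> linarith
    _ = Real.exp (7 * M) := by simp only [← Real.exp_add]; ring_nf
    _ ≤ Real.exp (32 * d ^ 4 * θ ^ 2 * φ) := Real.exp_le_exp.2 (by rw [hM]; nlinarith)

theorem exists_pairwiseDisjoint_nbhdSupport {n m d : ℕ} {I : Fin n → Finset (Fin m)}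
    (hd : 0 < d) (hI : ∀ i, #(I i) ≤ d) {θ Θ c ρ : ℝ} {t : ℕ} (hc : 0 ≤ c) (ht : d * ⌊θ⌋₊ ≤ t)
    (hρ : 1 + c * (d * t : ℕ) ≤ ρ) (hΘ : 2 * c * d * ρ ^ (d * t) ≤ Θ)
    (hband : 2 * ∑ j ∈ band (rightDeg I) θ Θ, rightDeg I j ≤ n) :
    ∃ (S : Finset (Fin m)) (B : Finset (Fin n)),
      (B : Set (Fin n)).PairwiseDisjoint (nbhdSupport I S) ∧ (∀ b ∈ B, #(nbhdG I S b) ≤ t) ∧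
      c * #S ≤ #B ∧ n / (2 * ρ ^ (d * t)) ≤ #B := by
  classical
  set P := ρ ^ (d * t)
  have hP : 0 < P := pow_pos (by nlinarith [(d * t).cast_nonneg (α := ℝ)]) _
  set heavy : Finset (Fin m) := {j | Θ < rightDeg I j}
  set A : Finset (Fin n) := {i | ∀ j ∈ I i, j ∉ band (rightDeg I) θ Θ}
  have hheavy : 2 * c * P * #heavy ≤ n := by
    have h1 : (#heavy : ℝ) * Θ ≤ n * d := (card_filter_lt_rightDeg_mul_le I Θ).trans <| by
      exact_mod_cast (sum_le_sum fun i _ => hI i).trans_eq (by simp)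
    have h2 := mul_le_mul_of_nonneg_left hΘ (#heavy).cast_nonneg
    refine le_of_mul_le_mul_left (a := (d : ℝ)) ?_ (by exact_mod_cast hd)
    nlinarith
  have hA : (n : ℝ) ≤ 2 * #A := by
    have h1 : #Aᶜ ≤ #{i | ∃ j ∈ I i, j ∈ band (rightDeg I) θ Θ} :=
      card_le_card fun i hi => by simpa [A] using hi
    have h2 := card_filter_exists_mem_le_sum_rightDeg I (band (rightDeg I) θ Θ)
    have h3 := card_le_univ A
    simp only [card_compl, Fintype.card_fin] at h1 h3
    exact_mod_cast (by omega : n ≤ 2 * #A)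
  have hnbhd : ∀ S, heavy ⊆ S → ∀ a ∈ A, #(nbhdG I S a) ≤ t := by
    intro S hS a ha
    refine (card_nbhdG_le I fun j hj => ?_).trans ((Nat.mul_le_mul_right _ (hI a)).trans ht)
    obtain ⟨hjI, hjS⟩ := mem_sdiff.1 hj
    have hlight : j ∉ band (rightDeg I) θ Θ := (mem_filter.1 ha).2 j hjI
    have hΘj : (rightDeg I j : ℝ) ≤ Θ := not_lt.1 fun h => hjS (hS (by simp [heavy, h]))
    simp only [band, mem_filter, mem_univ, true_and, not_and, not_le] at hlight
    exact Nat.le_floor (not_lt.1 fun h => (hlight h).not_ge hΘj)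
  obtain ⟨S, B, hS, hBA, hB, hcard⟩ :=
    exists_pairwiseDisjoint_supp (nbhdSupport I) (nbhdSupport_anti I) (disjoint_nbhdSupport I) hc
      A (d * t) hρ heavy fun a ha => (card_nbhdSupport_le I hI heavy a).trans <| by
        rw [mul_comm d]; exact Nat.mul_le_mul_right _ (hnbhd heavy subset_rfl a ha)
  refine ⟨S, B, hB, fun b hb => hnbhd S hS b (hBA hb), ?_⟩
  have h1 : c * #heavy ≤ #A / P := by rw [le_div_iff₀ hP]; nlinarith
  have h2 : n / (2 * P) ≤ #A / P := by rw [div_le_div_iff₀ (by positivity) hP]; nlinarith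
  have h3 : c * #heavy ≤ c * #S :=
    mul_le_mul_of_nonneg_left (by exact_mod_cast card_le_card hS) hc
  constructor <;> linarith

theorem exists_pairwiseDisjoint_nbhdSupport_of_exp_le {n m d : ℕ} (hd : 1 ≤ d) {F : ℝ → ℝ}
    (hF : Monotone F) (hF1 : ∀ x : ℝ, 1 ≤ x → 1 ≤ F x) {I : Fin n → Finset (Fin m)}
    (hI : ∀ i, #(I i) ≤ d) {θ Θ : ℝ} (hθ : 1 ≤ θ)
    (hΘ : 1 / (d : ℝ) * Real.exp (32 * (d : ℝ) ^ 4 * θ ^ 2 * F (2 * d * θ)) ≤ Θ)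
    (hband : 2 * ∑ j ∈ band (rightDeg I) θ Θ, rightDeg I j ≤ n) :
    ∃ (S : Finset (Fin m)) (B : Finset (Fin n)) (t : ℕ),
      (B : Set (Fin n)).PairwiseDisjoint (nbhdSupport I S) ∧ (∀ b ∈ B, #(nbhdG I S b) ≤ t) ∧
      (#S : ℝ) ≤ #B / F t ∧ n / Θ ≤ #B ∧ (t : ℝ) ≤ d * θ := by
  have hd' : (1 : ℝ) ≤ d := by exact_mod_cast hd
  set φ := F (2 * d * θ)
  set t := d * ⌊θ⌋₊
  set ρ : ℝ := 1 + 2 * φ * (d * t : ℕ)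
  have hφ : 1 ≤ φ := hF1 _ (by nlinarith)
  have ht : (t : ℝ) ≤ d * θ := by
    simp only [t, Nat.cast_mul]; gcongr; exact Nat.floor_le (by linarith)
  have hFt : 1 ≤ F t := hF1 _ <| by
    exact_mod_cast Nat.one_le_iff_ne_zero.2 (mul_ne_zero (by omega) (Nat.floor_pos.2 hθ).ne')
  have hFtφ : F t ≤ φ := hF (by nlinarith)
  have hρΘ : 4 * d * φ * ρ ^ (d * t) ≤ Θ :=
    (four_mul_mul_pow_le_exp hd' hθ hφ (by push_cast; nlinarith)).trans hΘ
  obtain ⟨S, B, hB, hnbhd, hSB, hnB⟩ := exists_pairwiseDisjoint_nbhdSupport (c := 2 * φ)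
    (by omega) hI (by positivity) le_rfl le_rfl (by linarith) hband
  refine ⟨S, B, t, hB, hnbhd, ?_, ?_, ht⟩
  · rw [le_div_iff₀ (by linarith)]; nlinarith
  · refine (div_le_div_of_nonneg_left (by positivity) (by positivity) ?_).trans hnB
    have hP := pow_pos (by positivity : (0 : ℝ) < ρ) (d * t)
    nlinarith [one_le_mul_of_one_le_of_one_le hd' hφ]

theorem stmt17_general (d n m : ℕ) (hd : 1 ≤ d) (lam kap : ℝ)
    (F : ℝ → ℝ) (hF : Monotone F) (hF1 : ∀ x : ℝ, 1 ≤ x → 1 ≤ F x)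
    (I : Fin n → Finset (Fin m)) (hI : ∀ i, (I i).card ≤ d)
    (H : ℝ → ℝ) (L : ℝ) (hL : 1 ≤ L)
    (hHF : ∀ x : ℝ, L ≤ x →
      (1 / (d : ℝ)) * Real.exp (32 * (d : ℝ) ^ 4 * x ^ 2 * F (2 * (d : ℝ) * x)) ≤ H x)
    (hH2 : ∀ x : ℝ, L ≤ x → 2 * x ≤ H x)
    (hkl : lam ≤ kap) (hlb : (d : ℝ) * H^[2 * d + 2] L ≤ lam) :
    ∃ (S : Finset (Fin m)) (r t : ℕ) (idx : Fin r → Fin n),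
      Function.Injective idx ∧
      (∀ j j' : Fin r, j ≠ j' →
        ∀ u ∈ nbhdG I S (idx j), ∀ v ∈ nbhdG I S (idx j'),
          Disjoint (I u \ S) (I v \ S)) ∧
      (∀ j : Fin r, (nbhdG I S (idx j)).card ≤ t) ∧
      (S.card : ℝ) ≤ (r : ℝ) / F (t : ℝ) ∧ (n : ℝ) / lam ≤ (r : ℝ) ∧ (t : ℝ) ≤ kap := by
  set θ : ℕ → ℝ := fun k => H^[k] L
  have hθ : Monotone θ := monotone_iterate_apply_of_le_map fun x hx => by linarith [hH2 x hx]
  have hθL : ∀ k, L ≤ θ k := fun k => hθ k.zero_le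
  obtain ⟨k, hk, hband⟩ := exists_mul_sum_band_le (rightDeg I) hθ (N := 2 * d + 2) (by omega)
  have hdeg : ∑ j, rightDeg I j ≤ n * d :=
    (sum_rightDeg I).trans_le ((sum_le_sum fun i _ => hI i).trans_eq (by simp))
  obtain ⟨S, B, t, hB, hnbhd, hSB, hnB, ht⟩ :=
    exists_pairwiseDisjoint_nbhdSupport_of_exp_le hd hF hF1 hI (hL.trans (hθL k))
      ((hHF _ (hθL k)).trans_eq (iterate_succ_apply' H k L).symm) (by nlinarith)
  have hΘ : d * θ (k + 1) ≤ lam :=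
    (mul_le_mul_of_nonneg_left (hθ (show k + 1 ≤ 2 * d + 2 by omega)) d.cast_nonneg).trans hlb
  have hΘ1 : 1 ≤ θ (k + 1) := hL.trans (hθL (k + 1))
  set idx := B.orderEmbOfFin rfl
  refine ⟨S, #B, t, idx, idx.injective, fun j j' hjj' => disjoint_sdiff_of_disjoint_nbhdSupport I
    (hB (B.orderEmbOfFin_mem rfl j) (B.orderEmbOfFin_mem rfl j') (idx.injective.ne hjj')),
    fun j => hnbhd _ (B.orderEmbOfFin_mem rfl j), hSB, ?_, ?_⟩
  · refine (div_le_div_of_nonneg_left (by positivity) (by linarith) ?_).trans hnB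
    nlinarith [(by exact_mod_cast hd : (1 : ℝ) ≤ d)]
  · linarith [mul_le_mul_of_nonneg_left (hθ k.le_succ) d.cast_nonneg]

theorem stmt17 (d n m : ℕ) (hd : 1 ≤ d) (lam kap : ℝ) (hlam : 1 ≤ lam) (hkap : 1 ≤ kap)
    (F : ℝ → ℝ) (hF : Monotone F) (hF1 : ∀ x : ℝ, 1 ≤ x → 1 ≤ F x)
    (I : Fin n → Finset (Fin m)) (hI : ∀ i, (I i).card ≤ d)
    (H : ℝ → ℝ) (hH : Monotone H) (L : ℝ) (hL : 1 ≤ L)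
    (hHF : ∀ x : ℝ, L ≤ x →
      (1 / (d : ℝ)) * Real.exp (32 * (d : ℝ) ^ 4 * x ^ 2 * F (2 * (d : ℝ) * x)) ≤ H x)
    (hH2 : ∀ x : ℝ, L ≤ x → 2 * x ≤ H x)
    (hkl : lam ≤ kap) (hlb : (d : ℝ) * H^[2 * d + 2] L ≤ lam) :
    ∃ (S : Finset (Fin m)) (r t : ℕ) (idx : Fin r → Fin n),
      Function.Injective idx ∧
      (∀ j j' : Fin r, j ≠ j' →
        ∀ u ∈ nbhdG I S (idx j), ∀ v ∈ nbhdG I S (idx j'),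
          Disjoint (I u \ S) (I v \ S)) ∧
      (∀ j : Fin r, (nbhdG I S (idx j)).card ≤ t) ∧
      (S.card : ℝ) ≤ (r : ℝ) / F (t : ℝ) ∧ (n : ℝ) / lam ≤ (r : ℝ) ∧ (t : ℝ) ≤ kap :=
  stmt17_general d n m hd lam kap F hF hF1 I hI H L hL hHF hH2 hkl hlb
end
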